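/- For a latent space (M, w_{1:∞}) with M rigid and each w_n injective, two deterministic location vectors x_{1:n} and y_{1:n} generate equal random-graph distributions graph_n(x_{1:n}) = graph_n(y_{1:n}) (in distribution) if and only if [x_{1:n}] = [y_{1:n}], i.e., there is an isometry of M carrying each x_i to y_i. -/

import Mathlib

open MeasureTheory

variable {M : Type*} [MetricSpace M]

/-- Two `n`-tuples of points of `M` are equivalent (write `[x] = [y]`) when some
isometry of `M` carries one to the other coordinatewise. -/
def TupleEquiv {n : ℕ} (x y : Fin n → M) : Prop :=
  ∃ φ : M ≃ᵢ M, ∀ i, φ (y i) = x i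

/-- A metric space is *rigid* when any two tuples with identical pairwise
distance matrices are related by a global isometry. -/
def Rigid (M : Type*) [MetricSpace M] : Prop :=
  ∀ (n : ℕ) (x y : Fin n → M),
    (∀ p q, dist (x p) (x q) = dist (y p) (y q)) → TupleEquiv x y

/-- The potential edges of a graph on `n` labeled vertices. -/
def Edges (n : ℕ) : Type := { e : Fin n × Fin n // e.1 < e.2 }

instance (n : ℕ) : Fintype (Edges n) := by unfold Edges; infer_instance

instance (n : ℕ) : DecidableEq (Edges n) := by unfold Edges; infer_instance

/-- `graphMeasure w x` is the distribution `graph_n(x_{1:n})` of a random graph on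
`n` labeled vertices located at `x : Fin n → M`: each edge `{i,j}` is present
independently with probability `w (dist (x i) (x j))`. -/
noncomputable def graphMeasure (w : ℝ → ℝ) (hw : ∀ t, w t ≤ 1) {n : ℕ}
    (x : Fin n → M) : Measure (Edges n → Bool) :=
  Measure.pi fun e =>
    (PMF.bernoulli (Real.toNNReal (w (dist (x e.1.1) (x e.1.2))))
      (Real.toNNReal_le_one.mpr (hw _))).toMeasure

/-!
The marginal of `graph_n(x)` on an edge `{i,j}` is Bernoulli with parameter `w (dist xᵢ xⱼ)`, so
equal graph distributions have equal edge probabilities; injectivity of `w` turns these into equal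
distance matrices, and rigidity into an isometry. Conversely an isometry preserves all distances.
-/

section

variable {n : ℕ}

lemma graphMeasure_edge_present (w : ℝ → ℝ) (hw : ∀ t, w t ≤ 1) (x : Fin n → M)
    (e : Edges n) :
    graphMeasure w hw x {ω | ω e = true} = Real.toNNReal (w (dist (x e.1.1) (x e.1.2))) := by
  rw [graphMeasure,
    show {ω : Edges n → Bool | ω e = true} = Function.eval e ⁻¹' ({true} : Set Bool) from rfl,
    (measurePreserving_eval _ e).measure_preimage (measurableSet_singleton _).nullMeasurableSet,
    PMF.toMeasure_apply_singleton _ _ (measurableSet_singleton _)]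
  rfl

theorem graphMeasure_eq_iff {w : ℝ → ℝ} (hw0 : ∀ t, 0 ≤ w t) (hw : ∀ t, w t ≤ 1)
    (x y : Fin n → M) :
    graphMeasure w hw x = graphMeasure w hw y ↔
      ∀ e : Edges n, w (dist (x e.1.1) (x e.1.2)) = w (dist (y e.1.1) (y e.1.2)) := by
  refine ⟨fun h e => ?_, fun h => ?_⟩
  · have hprob := graphMeasure_edge_present w hw x e
    rw [h, graphMeasure_edge_present, ENNReal.coe_inj,
      Real.toNNReal_eq_toNNReal_iff (hw0 _) (hw0 _)] at hprob
    exact hprob.symm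
  · unfold graphMeasure
    simp_rw [h]

lemma forall_edges_dist_eq_iff (x y : Fin n → M) :
    (∀ e : Edges n, dist (x e.1.1) (x e.1.2) = dist (y e.1.1) (y e.1.2)) ↔
      ∀ p q, dist (x p) (x q) = dist (y p) (y q) := by
  refine ⟨fun h p q => ?_, fun h e => h _ _⟩
  rcases lt_trichotomy p q with hpq | rfl | hqp
  · exact h ⟨(p, q), hpq⟩
  · simp
  · rw [dist_comm (x p), dist_comm (y p)]
    exact h ⟨(q, p), hqp⟩

lemma TupleEquiv.dist_eq {x y : Fin n → M} (h : TupleEquiv x y) (p q : Fin n) :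
    dist (x p) (x q) = dist (y p) (y q) := by
  obtain ⟨φ, hφ⟩ := h
  rw [← hφ p, ← hφ q, φ.dist_eq]

end

theorem graph_dist_eq_iff_isometry_class_general (M : Type*) [MetricSpace M]
    (hM : Rigid M) (w : ℕ → ℝ → ℝ)
    (hw01 : ∀ n t, w n t ∈ Set.Icc (0 : ℝ) 1)
    (hwinj : ∀ n, Set.InjOn (w n) (Set.Ici 0))
    (n : ℕ) (x y : Fin n → M) :
    graphMeasure (w n) (fun t => (hw01 n t).2) x
        = graphMeasure (w n) (fun t => (hw01 n t).2) y
      ↔ TupleEquiv x y := by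
  have hw0 : ∀ t, 0 ≤ w n t := fun t => (hw01 n t).1
  simp only [graphMeasure_eq_iff hw0, (hwinj n).eq_iff (Set.mem_Ici.mpr dist_nonneg)
    (Set.mem_Ici.mpr dist_nonneg), forall_edges_dist_eq_iff]
  exact ⟨hM n x y, TupleEquiv.dist_eq⟩

/-- **Identifiability of node locations.**  For a latent space `(M, w)` with `M`
rigid and each link function `wₙ : [0,∞) → [0,1]` non-increasing and injective,
two deterministic location vectors generate the same random-graph distribution,
`graph_n(x_{1:n}) = graph_n(y_{1:n})`, if and only if `[x_{1:n}] = [y_{1:n}]`,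
i.e. some isometry of `M` carries each `xᵢ` to `yᵢ`. -/
theorem graph_dist_eq_iff_isometry_class (M : Type*) [MetricSpace M]
    (hM : Rigid M) (w : ℕ → ℝ → ℝ)
    (hw01 : ∀ n t, w n t ∈ Set.Icc (0 : ℝ) 1)
    (hwinj : ∀ n, Set.InjOn (w n) (Set.Ici 0))
    (hwanti : ∀ n, AntitoneOn (w n) (Set.Ici 0))
    (n : ℕ) (x y : Fin n → M) :
    graphMeasure (w n) (fun t => (hw01 n t).2) x
        = graphMeasure (w n) (fun t => (hw01 n t).2) y
      ↔ TupleEquiv x y :=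
  graph_dist_eq_iff_isometry_class_general M hM w hw01 hwinj n x y
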